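/- arXiv:1203.4180 — 2 statements merged into one kernel-verified Lean document; each statement's English description precedes it below -/
import Mathlib

section
/- Let A be a Hopf algebra in a braided category with non-degenerate Hopf pairing ω, and let Λ : 𝟙 → A be a morphism. Then Λ is a left integral for A if and only if λ = ω ∘ (id_A ⊗ Λ) : A → 𝟙 is a right cointegral for A. -/
open CategoryTheory MonoidalCategory

universe v u

variable {C : Type u} [Category.{v} C] [MonoidalCategory C] [BraidedCategory C]

/-- A Hopf algebra in a braided monoidal category. -/
structure HopfAlgIn (C : Type u) [Category.{v} C] [MonoidalCategory C]
    [BraidedCategory C] where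
  A : C
  mul : A ⊗ A ⟶ A
  unit : 𝟙_ C ⟶ A
  comul : A ⟶ A ⊗ A
  counit : A ⟶ 𝟙_ C
  antipode : A ⟶ A
  antipodeInv : A ⟶ A
  mul_assoc : (α_ A A A).inv ≫ (mul ▷ A) ≫ mul = (A ◁ mul) ≫ mul
  mul_unit : (A ◁ unit) ≫ mul = (ρ_ A).hom
  unit_mul : (unit ▷ A) ≫ mul = (λ_ A).hom
  comul_assoc : comul ≫ (comul ▷ A) ≫ (α_ A A A).hom = comul ≫ (A ◁ comul)
  comul_counit : comul ≫ (A ◁ counit) ≫ (ρ_ A).hom = 𝟙 A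
  counit_comul : comul ≫ (counit ▷ A) ≫ (λ_ A).hom = 𝟙 A
  mul_comul : mul ≫ comul = (comul ⊗ₘ comul) ≫ tensorμ A A A A ≫ (mul ⊗ₘ mul)
  unit_comul : unit ≫ comul = (λ_ (𝟙_ C)).inv ≫ (unit ⊗ₘ unit)
  mul_counit : mul ≫ counit = (counit ⊗ₘ counit) ≫ (λ_ (𝟙_ C)).hom
  unit_counit : unit ≫ counit = 𝟙 (𝟙_ C)
  antipode_left : comul ≫ (antipode ▷ A) ≫ mul = counit ≫ unit
  antipode_right : comul ≫ (A ◁ antipode) ≫ mul = counit ≫ unit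
  antipode_invLeft : antipode ≫ antipodeInv = 𝟙 A
  antipode_invRight : antipodeInv ≫ antipode = 𝟙 A

namespace HopfAlgIn

variable (H : HopfAlgIn C)

/-- The morphism `ω(id_A ⊗ ω ⊗ id_A) : A⊗A⊗A⊗A ⟶ 𝟙` pairing the two middle factors with
the inner copy of `ω` and the two outer factors with the outer copy of `ω`. -/
def pairInner (ω : H.A ⊗ H.A ⟶ 𝟙_ C) : (H.A ⊗ H.A) ⊗ (H.A ⊗ H.A) ⟶ 𝟙_ C :=
  (α_ H.A H.A (H.A ⊗ H.A)).hom ≫ (H.A ◁ (α_ H.A H.A H.A).inv) ≫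
    (H.A ◁ (ω ▷ H.A)) ≫ (H.A ◁ (λ_ H.A).hom) ≫ ω

/-- `ω : A ⊗ A ⟶ 𝟙` is a Hopf pairing for `H`. -/
structure IsHopfPairing (ω : H.A ⊗ H.A ⟶ 𝟙_ C) : Prop where
  mul_left : (H.mul ▷ H.A) ≫ ω = ((H.A ⊗ H.A) ◁ H.comul) ≫ H.pairInner ω
  mul_right : (H.A ◁ H.mul) ≫ ω = (H.comul ▷ (H.A ⊗ H.A)) ≫ H.pairInner ω
  unit_left : (H.unit ▷ H.A) ≫ ω = (λ_ H.A).hom ≫ H.counit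
  unit_right : (H.A ◁ H.unit) ≫ ω = (ρ_ H.A).hom ≫ H.counit

/-- `Λ` is a left integral for `H`: `m(id_A ⊗ Λ) = Λ ∘ ε`. -/
def IsLeftIntegral (Λ : 𝟙_ C ⟶ H.A) : Prop :=
  (ρ_ H.A).inv ≫ (H.A ◁ Λ) ≫ H.mul = H.counit ≫ Λ

/-- `Λ` is a right integral for `H`: `m(Λ ⊗ id_A) = Λ ∘ ε`. -/
def IsRightIntegral (Λ : 𝟙_ C ⟶ H.A) : Prop :=
  (λ_ H.A).inv ≫ (Λ ▷ H.A) ≫ H.mul = H.counit ≫ Λ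

/-- `l` is a left cointegral for `H`: `(id_A ⊗ l)Δ = u ∘ l`. -/
def IsLeftCointegral (l : H.A ⟶ 𝟙_ C) : Prop :=
  H.comul ≫ (H.A ◁ l) ≫ (ρ_ H.A).hom = l ≫ H.unit

/-- `l` is a right cointegral for `H`: `(l ⊗ id_A)Δ = u ∘ l`. -/
def IsRightCointegral (l : H.A ⟶ 𝟙_ C) : Prop :=
  H.comul ≫ (l ▷ H.A) ≫ (λ_ H.A).hom = l ≫ H.unit

/-- `Ω` is an inverse of the pairing `ω`, witnessing its non-degeneracy:
`(ω ⊗ id_A)(id_A ⊗ Ω) = id_A = (id_A ⊗ ω)(Ω ⊗ id_A)`. -/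
def IsInversePairing (ω : H.A ⊗ H.A ⟶ 𝟙_ C) (Ω : 𝟙_ C ⟶ H.A ⊗ H.A) : Prop :=
  (ρ_ H.A).inv ≫ (H.A ◁ Ω) ≫ (α_ H.A H.A H.A).inv ≫ (ω ▷ H.A) ≫ (λ_ H.A).hom = 𝟙 H.A ∧
  (λ_ H.A).inv ≫ (Ω ▷ H.A) ≫ (α_ H.A H.A H.A).hom ≫ (H.A ◁ ω) ≫ (ρ_ H.A).hom = 𝟙 H.A

end HopfAlgIn

/-!
With `λ = ω(-, Λ)`, the Hopf pairing axioms give `ω(x, yΛ) = ω(λ(x₁)x₂, y)` and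
`ω(x, ε(y)Λ) = ω(λ(x)1, y)`. So the two sides of the left integral equation for `Λ`, fed into
the second slot of `ω`, are the two sides of the right cointegral equation for `λ` fed into the
first slot, and non-degeneracy of `ω` cancels it in either slot.
-/

namespace HopfAlgIn

omit [BraidedCategory C] in
theorem scalar_whisker_exchange {X Y : C} (f : X ⟶ 𝟙_ C) (g : Y ⟶ 𝟙_ C) :
    (X ◁ g) ≫ (ρ_ X).hom ≫ f = (f ▷ Y) ≫ (λ_ Y).hom ≫ g := by
  rw [← rightUnitor_naturality, ← leftUnitor_naturality, ← tensorHom_def'_assoc,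
    tensorHom_def_assoc, unitors_equal]

variable {H : HopfAlgIn C} {ω : H.A ⊗ H.A ⟶ 𝟙_ C}

namespace IsInversePairing

variable {Ω : 𝟙_ C ⟶ H.A ⊗ H.A} (hΩ : H.IsInversePairing ω Ω)
include hΩ

theorem whiskerRight_comp_eq_iff {X : C} {F G : X ⟶ H.A} :
    (F ▷ H.A) ≫ ω = (G ▷ H.A) ≫ ω ↔ F = G := by
  have recover (F : X ⟶ H.A) : (ρ_ X).inv ≫ (X ◁ Ω) ≫ (α_ X H.A H.A).inv ≫
      (((F ▷ H.A) ≫ ω) ▷ H.A) ≫ (λ_ H.A).hom = F := calc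
    _ = 𝟙 _ ⊗≫ (X ◁ Ω ≫ F ▷ (H.A ⊗ H.A)) ⊗≫ (ω ▷ H.A) ⊗≫ 𝟙 _ := by monoidal
    _ = F ≫ ((ρ_ H.A).inv ≫ (H.A ◁ Ω) ≫ (α_ H.A H.A H.A).inv ≫ (ω ▷ H.A) ≫ (λ_ H.A).hom) := by
      rw [whisker_exchange]; monoidal
    _ = F := by rw [hΩ.1, Category.comp_id]
  refine ⟨fun h => ?_, fun h => h ▸ rfl⟩
  rw [← recover F, ← recover G, h]

theorem whiskerLeft_comp_eq_iff {X : C} {F G : X ⟶ H.A} :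
    (H.A ◁ F) ≫ ω = (H.A ◁ G) ≫ ω ↔ F = G := by
  have recover (F : X ⟶ H.A) : (λ_ X).inv ≫ (Ω ▷ X) ≫ (α_ H.A H.A X).hom ≫
      (H.A ◁ ((H.A ◁ F) ≫ ω)) ≫ (ρ_ H.A).hom = F := calc
    _ = 𝟙 _ ⊗≫ (Ω ▷ X ≫ (H.A ⊗ H.A) ◁ F) ⊗≫ (H.A ◁ ω) ⊗≫ 𝟙 _ := by monoidal
    _ = F ≫ ((λ_ H.A).inv ≫ (Ω ▷ H.A) ≫ (α_ H.A H.A H.A).hom ≫ (H.A ◁ ω) ≫ (ρ_ H.A).hom) := by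
      rw [← whisker_exchange]; monoidal
    _ = F := by rw [hΩ.2, Category.comp_id]
  refine ⟨fun h => ?_, fun h => h ▸ rfl⟩
  rw [← recover F, ← recover G, h]

end IsInversePairing

theorem whiskerLeft_comp_pairInner (Λ : 𝟙_ C ⟶ H.A) :
    ((H.A ⊗ H.A) ◁ ((ρ_ H.A).inv ≫ (H.A ◁ Λ))) ≫ H.pairInner ω
      = (α_ H.A H.A H.A).hom ≫ (H.A ◁ ω) ≫ (H.A ◁ Λ) ≫ ω := calc
  _ = 𝟙 _ ⊗≫ H.A ◁ ((H.A ⊗ H.A) ◁ Λ ≫ ω ▷ H.A) ⊗≫ ω := by rw [pairInner]; monoidal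
  _ = 𝟙 _ ⊗≫ H.A ◁ (ω ▷ 𝟙_ C ≫ 𝟙_ C ◁ Λ) ⊗≫ ω := by rw [whisker_exchange]
  _ = _ := by monoidal

namespace IsHopfPairing

variable (hω : H.IsHopfPairing ω) (Λ : 𝟙_ C ⟶ H.A)
include hω

theorem whiskerLeft_rightMul_comp :
    (H.A ◁ ((ρ_ H.A).inv ≫ (H.A ◁ Λ) ≫ H.mul)) ≫ ω =
      ((H.comul ≫ (((ρ_ H.A).inv ≫ (H.A ◁ Λ) ≫ ω) ▷ H.A) ≫ (λ_ H.A).hom) ▷ H.A) ≫ ω := calc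
  _ = (H.A ◁ ((ρ_ H.A).inv ≫ (H.A ◁ Λ))) ≫ (H.comul ▷ (H.A ⊗ H.A)) ≫ H.pairInner ω := by
    simp only [MonoidalCategory.whiskerLeft_comp, Category.assoc, hω.mul_right]
  _ = (H.comul ▷ H.A) ≫ (α_ H.A H.A H.A).hom ≫ (H.A ◁ ω) ≫ (H.A ◁ Λ) ≫ ω := by
    rw [whisker_exchange_assoc, whiskerLeft_comp_pairInner]
  _ = (H.comul ▷ H.A) ≫ (α_ H.A H.A H.A).hom ≫ (H.A ◁ ω) ≫ (ρ_ H.A).hom ≫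
      (ρ_ H.A).inv ≫ (H.A ◁ Λ) ≫ ω := by
    rw [Iso.hom_inv_id_assoc]
  _ = _ := by
    rw [scalar_whisker_exchange]; monoidal

theorem whiskerLeft_counit_comp :
    (H.A ◁ (H.counit ≫ Λ)) ≫ ω = ((((ρ_ H.A).inv ≫ (H.A ◁ Λ) ≫ ω) ≫ H.unit) ▷ H.A) ≫ ω := calc
  _ = (H.A ◁ H.counit) ≫ (ρ_ H.A).hom ≫ (ρ_ H.A).inv ≫ (H.A ◁ Λ) ≫ ω := by
    rw [Iso.hom_inv_id_assoc, MonoidalCategory.whiskerLeft_comp_assoc]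
  _ = _ := by
    rw [scalar_whisker_exchange, ← hω.unit_left]
    simp only [comp_whiskerRight, Category.assoc]

end IsHopfPairing

end HopfAlgIn

/-- If `ω` is a non-degenerate Hopf pairing for `A`, then `Λ : 𝟙 ⟶ A` is a left integral if
and only if `λ = ω ∘ (id_A ⊗ Λ)` is a right cointegral. -/
theorem leftIntegral_iff_rightCointegral (H : HopfAlgIn C) (ω : H.A ⊗ H.A ⟶ 𝟙_ C)
    (hω : H.IsHopfPairing ω) (Ω : 𝟙_ C ⟶ H.A ⊗ H.A) (hΩ : H.IsInversePairing ω Ω)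
    (Λ : 𝟙_ C ⟶ H.A) :
    H.IsLeftIntegral Λ ↔ H.IsRightCointegral ((ρ_ H.A).inv ≫ (H.A ◁ Λ) ≫ ω) := by
  rw [HopfAlgIn.IsLeftIntegral, ← hΩ.whiskerLeft_comp_eq_iff, hω.whiskerLeft_rightMul_comp,
    hω.whiskerLeft_counit_comp, hΩ.whiskerRight_comp_eq_iff, HopfAlgIn.IsRightCointegral]
end

section
/- Let C be a k-additive category, D a fusion category over k, and F : D^op × D → C a k-bilinear functor. Then F has a coend, namely C₀ = ⊕_{i ∈ I} F(i,i) where I is a representative set of scalar objects of D, with dinatural transformation ρ_Y = Σ_α F(q^α_Y, p^α_Y) for any I-decomposition (p^α_Y, q^α_Y) of Y. -/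
open CategoryTheory MonoidalCategory CategoryTheory.Limits

universe v u v' u'

variable {D : Type u} [Category.{v} D] {C : Type u'} [Category.{v'} C]

variable (k : Type*) [CommRing k]

/-- An object is scalar if `k → End X`, `a ↦ a • id_X`, is bijective. -/
def IsScalarObj [Preadditive D] [CategoryTheory.Linear k D] (X : D) : Prop :=
  Function.Bijective (fun a : k => a • (𝟙 X))

variable {k}

/-- A decomposition of an object `Y` as a finite direct sum of objects from the family
`r : ι → D` (an `I`-decomposition). -/
structure IDecomp [Preadditive D] {ι : Type} (r : ι → D) (Y : D) where
  n : ℕ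
  idx : Fin n → ι
  p : ∀ a, Y ⟶ r (idx a)
  q : ∀ a, r (idx a) ⟶ Y
  orth : ∀ a b, q a ≫ p b = if h : a = b then eqToHom (by rw [h]) else 0
  complete : ∑ a, p a ≫ q a = 𝟙 Y

variable [Preadditive D] [CategoryTheory.Linear k D] [Preadditive C]
  [CategoryTheory.Linear k C] [HasFiniteBiproducts C]

/-- The candidate coend object `⨁_{i ∈ I} F(i, i)`. -/
noncomputable def coendObj (F : Dᵒᵖ × D ⥤ C) {ι : Type} [Fintype ι] (r : ι → D) : C :=
  ⨁ fun i : ι => F.obj (Opposite.op (r i), r i)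

/-- The candidate universal dinatural transformation `ρ_Y = ∑_α F(q^α_Y, p^α_Y)`. -/
noncomputable def coendRho (F : Dᵒᵖ × D ⥤ C) {ι : Type} [Fintype ι] (r : ι → D)
    (dec : ∀ Y : D, IDecomp r Y) (Y : D) :
    F.obj (Opposite.op Y, Y) ⟶ coendObj F r :=
  ∑ a, F.map ((((dec Y).q a).op, (dec Y).p a) :
        (Opposite.op Y, Y) ⟶ (Opposite.op (r ((dec Y).idx a)), r ((dec Y).idx a))) ≫
      biproduct.ι (fun i : ι => F.obj (Opposite.op (r i), r i)) ((dec Y).idx a)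

/-! Morphisms between the representatives `r i` are scalar multiples of identities or zero, so the
biproduct inclusions `ι_i : F(r i, r i) ⟶ ⨁ F(r i, r i)` are dinatural with respect to all
morphisms between representatives. Through the `I`-decompositions, any family `e` with this
property extends to `Y ↦ ∑_α F(q_α, p_α) ≫ e_{i_α}`, which is dinatural on all of `D` by
bilinearity of `F` and `∑_α p_α ≫ q_α = 𝟙`; conversely a dinatural family `d` is recovered
from its values on the representatives by the same formula. So `ρ`, the extension of `ι`, is
dinatural, `biproduct.desc (d ∘ r)` factors `d` through it, and it is unique because
`ρ_{r i} = ι_i`. -/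

open Opposite

section Dinatural

omit [Preadditive D] [Preadditive C] [HasFiniteBiproducts C]

variable (F : Dᵒᵖ × D ⥤ C)

/-- For `r = id` this is ordinary dinaturality. -/
def IsDinaturalOn {J : Type*} (r : J → D) {Z : C} (e : ∀ j, F.obj (op (r j), r j) ⟶ Z) :
    Prop :=
  ∀ i j (h : r i ⟶ r j),
    F.map ((h.op, 𝟙 (r i)) : (op (r j), r i) ⟶ (op (r i), r i)) ≫ e i =
      F.map ((𝟙 (op (r j)), h) : (op (r j), r i) ⟶ (op (r j), r j)) ≫ e j

lemma map_op_eq_map_op_id_comp {A B V W : D} (g : A ⟶ B) (v : V ⟶ W) :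
    F.map ((g.op, v) : (op B, V) ⟶ (op A, W)) =
      F.map ((g.op, 𝟙 V) : (op B, V) ⟶ (op A, V)) ≫
        F.map ((𝟙 (op A), v) : (op A, V) ⟶ (op A, W)) := by
  rw [← F.map_comp, prod_comp, Category.comp_id, Category.id_comp]

variable {F}

lemma IsDinaturalOn.map_comp_eq {J : Type*} {r : J → D} {Z : C}
    {e : ∀ j, F.obj (op (r j), r j) ⟶ Z} (he : IsDinaturalOn F r e) {i j : J}
    (h : r i ⟶ r j) {Z₁ Z₂ : D} (u : r j ⟶ Z₁) (v : Z₂ ⟶ r i) :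
    F.map (((h ≫ u).op, v) : (op Z₁, Z₂) ⟶ (op (r i), r i)) ≫ e i =
      F.map ((u.op, v ≫ h) : (op Z₁, Z₂) ⟶ (op (r j), r j)) ≫ e j := by
  have hl : F.map (((h ≫ u).op, v) : (op Z₁, Z₂) ⟶ (op (r i), r i)) =
      F.map ((u.op, v) : (op Z₁, Z₂) ⟶ (op (r j), r i)) ≫ F.map (h.op, 𝟙 (r i)) := by
    rw [← F.map_comp]; simp
  have hr : F.map ((u.op, v ≫ h) : (op Z₁, Z₂) ⟶ (op (r j), r j)) =
      F.map ((u.op, v) : (op Z₁, Z₂) ⟶ (op (r j), r i)) ≫ F.map (𝟙 (op (r j)), h) := by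
    rw [← F.map_comp]; simp
  rw [hl, hr, Category.assoc, Category.assoc, he]

lemma IsDinaturalOn.comp {J : Type*} {r : J → D} {Z : C} {e : ∀ j, F.obj (op (r j), r j) ⟶ Z}
    (he : IsDinaturalOn F r e) {Z' : C} (φ : Z ⟶ Z') : IsDinaturalOn F r fun j => e j ≫ φ :=
  fun i j h => by rw [← Category.assoc, he i j h, Category.assoc]

end Dinatural

section Extend

omit [HasFiniteBiproducts C]

variable {F : Dᵒᵖ × D ⥤ C}

lemma map_sum_op_id
    (hadd₁ : ∀ {X Y : D} (f g : X ⟶ Y) (W : D),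
      F.map ((f.op + g.op, 𝟙 W) : (op Y, W) ⟶ (op X, W)) =
        F.map (f.op, 𝟙 W) + F.map (g.op, 𝟙 W))
    {α : Type*} (s : Finset α) {X Y : D} (g : α → (X ⟶ Y)) (W : D) :
    F.map (((∑ a ∈ s, g a).op, 𝟙 W) : (op Y, W) ⟶ (op X, W)) =
      ∑ a ∈ s, F.map (((g a).op, 𝟙 W) : (op Y, W) ⟶ (op X, W)) :=
  map_sum (AddMonoidHom.mk' (fun g : X ⟶ Y => F.map ((g.op, 𝟙 W) : (op Y, W) ⟶ (op X, W)))
    fun f g => by rw [op_add]; exact hadd₁ f g W) g s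

lemma map_id_sum
    (hadd₂ : ∀ (W : Dᵒᵖ) {X Y : D} (f g : X ⟶ Y),
      F.map ((𝟙 W, f + g) : (W, X) ⟶ (W, Y)) = F.map (𝟙 W, f) + F.map (𝟙 W, g))
    {α : Type*} (s : Finset α) (W : Dᵒᵖ) {X Y : D} (g : α → (X ⟶ Y)) :
    F.map ((𝟙 W, ∑ a ∈ s, g a) : (W, X) ⟶ (W, Y)) =
      ∑ a ∈ s, F.map ((𝟙 W, g a) : (W, X) ⟶ (W, Y)) :=
  map_sum (AddMonoidHom.mk' (fun g : X ⟶ Y => F.map ((𝟙 W, g) : (W, X) ⟶ (W, Y)))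
    (hadd₂ W)) g s

variable (F) in
def IDecomp.extend {ι : Type} {r : ι → D} {Y : D} (dec : IDecomp r Y) {Z : C}
    (e : ∀ i, F.obj (op (r i), r i) ⟶ Z) : F.obj (op Y, Y) ⟶ Z :=
  ∑ a, F.map (((dec.q a).op, dec.p a) : (op Y, Y) ⟶ (op (r (dec.idx a)), r (dec.idx a))) ≫
    e (dec.idx a)

namespace IDecomp

variable {ι : Type} {r : ι → D} {Y : D} (dec : IDecomp r Y) {Z : C}

lemma extend_comp (e : ∀ i, F.obj (op (r i), r i) ⟶ Z) {Z' : C} (φ : Z ⟶ Z') :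
    dec.extend F e ≫ φ = dec.extend F fun i => e i ≫ φ := by
  simp only [extend, Preadditive.sum_comp, Category.assoc]

lemma extend_eq_of_dinatural
    (hadd₁ : ∀ {X Y : D} (f g : X ⟶ Y) (W : D),
      F.map ((f.op + g.op, 𝟙 W) : (op Y, W) ⟶ (op X, W)) =
        F.map (f.op, 𝟙 W) + F.map (g.op, 𝟙 W))
    (e : ∀ i, F.obj (op (r i), r i) ⟶ Z) (d : F.obj (op Y, Y) ⟶ Z)
    (hd : ∀ a, F.map (((dec.p a).op, 𝟙 Y) : (op (r (dec.idx a)), Y) ⟶ (op Y, Y)) ≫ d =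
      F.map ((𝟙 (op (r (dec.idx a))), dec.p a) :
          (op (r (dec.idx a)), Y) ⟶ (op (r (dec.idx a)), r (dec.idx a))) ≫
        e (dec.idx a)) :
    dec.extend F e = d := by
  calc dec.extend F e
      = ∑ a, F.map (((dec.q a).op, 𝟙 Y) : (op Y, Y) ⟶ (op (r (dec.idx a)), Y)) ≫
          F.map ((𝟙 (op (r (dec.idx a))), dec.p a) : (op (r (dec.idx a)), Y) ⟶ _) ≫
            e (dec.idx a) := by
        refine Finset.sum_congr rfl fun a _ => ?_
        rw [map_op_eq_map_op_id_comp F, Category.assoc]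
    _ = ∑ a, F.map (((dec.p a ≫ dec.q a).op, 𝟙 Y) : (op Y, Y) ⟶ (op Y, Y)) ≫ d := by
        refine Finset.sum_congr rfl fun a _ => ?_
        rw [← hd, ← Category.assoc, ← F.map_comp, prod_comp, Category.comp_id, op_comp]
    _ = F.map (((∑ a, dec.p a ≫ dec.q a).op, 𝟙 Y) : (op Y, Y) ⟶ (op Y, Y)) ≫ d := by
        rw [map_sum_op_id hadd₁, Preadditive.sum_comp]
    _ = d := by
        rw [dec.complete, op_id, ← prod_id', F.map_id, Category.id_comp]

lemma map_id_comp_extend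
    (hadd₁ : ∀ {X Y : D} (f g : X ⟶ Y) (W : D),
      F.map ((f.op + g.op, 𝟙 W) : (op Y, W) ⟶ (op X, W)) =
        F.map (f.op, 𝟙 W) + F.map (g.op, 𝟙 W))
    {e : ∀ i, F.obj (op (r i), r i) ⟶ Z} (he : IsDinaturalOn F r e) {i : ι} (g : r i ⟶ Y) :
    F.map ((𝟙 (op Y), g) : (op Y, r i) ⟶ (op Y, Y)) ≫ dec.extend F e =
      F.map ((g.op, 𝟙 (r i)) : (op Y, r i) ⟶ (op (r i), r i)) ≫ e i := by
  calc F.map ((𝟙 (op Y), g) : (op Y, r i) ⟶ (op Y, Y)) ≫ dec.extend F e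
      = ∑ a, F.map (((dec.q a).op, g ≫ dec.p a) : (op Y, r i) ⟶ _) ≫ e (dec.idx a) := by
        simp only [extend, Preadditive.comp_sum, ← F.map_comp_assoc, prod_comp,
          Category.id_comp]
    _ = ∑ a, F.map ((((g ≫ dec.p a) ≫ dec.q a).op, 𝟙 (r i)) : (op Y, r i) ⟶ _) ≫ e i := by
        refine Finset.sum_congr rfl fun a _ => ?_
        rw [he.map_comp_eq, Category.id_comp]
    _ = F.map ((g.op, 𝟙 (r i)) : (op Y, r i) ⟶ (op (r i), r i)) ≫ e i := by
        simp only [← map_sum_op_id hadd₁, ← Preadditive.sum_comp, Category.assoc,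
          ← Preadditive.comp_sum, dec.complete, Category.comp_id]

end IDecomp

lemma isDinaturalOn_extend
    (hadd₁ : ∀ {X Y : D} (f g : X ⟶ Y) (W : D),
      F.map ((f.op + g.op, 𝟙 W) : (op Y, W) ⟶ (op X, W)) =
        F.map (f.op, 𝟙 W) + F.map (g.op, 𝟙 W))
    (hadd₂ : ∀ (W : Dᵒᵖ) {X Y : D} (f g : X ⟶ Y),
      F.map ((𝟙 W, f + g) : (W, X) ⟶ (W, Y)) = F.map (𝟙 W, f) + F.map (𝟙 W, g))
    {ι : Type} {r : ι → D} {Z : C} {e : ∀ i, F.obj (op (r i), r i) ⟶ Z}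
    (he : IsDinaturalOn F r e) (dec : ∀ Y, IDecomp r Y) :
    IsDinaturalOn F id fun Y => (dec Y).extend F e := by
  intro X Y (f : X ⟶ Y)
  have summand : ∀ a, F.map ((f.op, 𝟙 X) : (op Y, X) ⟶ (op X, X)) ≫
      F.map ((((dec X).q a).op, (dec X).p a) : (op X, X) ⟶ _) ≫ e ((dec X).idx a) =
      F.map ((𝟙 (op Y), ((dec X).p a ≫ (dec X).q a) ≫ f) : (op Y, X) ⟶ (op Y, Y)) ≫
        (dec Y).extend F e := by
    intro a
    calc _ = F.map ((𝟙 (op Y), (dec X).p a) : (op Y, X) ⟶ (op Y, r ((dec X).idx a))) ≫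
          F.map ((((dec X).q a ≫ f).op, 𝟙 (r ((dec X).idx a))) :
            (op Y, r ((dec X).idx a)) ⟶ (op (r ((dec X).idx a)), r ((dec X).idx a))) ≫
            e ((dec X).idx a) := by
          simp only [← F.map_comp_assoc, prod_comp, Category.id_comp, Category.comp_id, op_comp]
      _ = F.map ((𝟙 (op Y), (dec X).p a) : (op Y, X) ⟶ (op Y, r ((dec X).idx a))) ≫
          F.map ((𝟙 (op Y), (dec X).q a ≫ f) : (op Y, r ((dec X).idx a)) ⟶ (op Y, Y)) ≫
            (dec Y).extend F e := by
          rw [(dec Y).map_id_comp_extend hadd₁ he]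
      _ = _ := by
          simp only [← F.map_comp_assoc, prod_comp, Category.comp_id, Category.assoc]
  change F.map ((f.op, 𝟙 X) : (op Y, X) ⟶ (op X, X)) ≫ (dec X).extend F e =
    F.map ((𝟙 (op Y), f) : (op Y, X) ⟶ (op Y, Y)) ≫ (dec Y).extend F e
  rw [IDecomp.extend, Preadditive.comp_sum, Finset.sum_congr rfl fun a _ => summand a,
    ← Preadditive.sum_comp, ← map_id_sum hadd₂, ← Preadditive.sum_comp, (dec X).complete,
    Category.id_comp]

end Extend

lemma coendRho_comp (F : Dᵒᵖ × D ⥤ C) {ι : Type} [Fintype ι] (r : ι → D)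
    (dec : ∀ Y : D, IDecomp r Y) (Y : D) {Z : C} (φ : coendObj F r ⟶ Z) :
    coendRho F r dec Y ≫ φ =
      (dec Y).extend F fun i => biproduct.ι (fun j => F.obj (op (r j), r j)) i ≫ φ :=
  IDecomp.extend_comp _ _ _

lemma isDinaturalOn_biproduct_ι (F : Dᵒᵖ × D ⥤ C)
    (hsmul₁ : ∀ {X Y : D} (f : X ⟶ Y) (a : k) (W : D),
      F.map (((a • f).op, 𝟙 W) : (op Y, W) ⟶ (op X, W)) = a • F.map (f.op, 𝟙 W))
    (hsmul₂ : ∀ (W : Dᵒᵖ) {X Y : D} (f : X ⟶ Y) (a : k),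
      F.map ((𝟙 W, a • f) : (W, X) ⟶ (W, Y)) = a • F.map (𝟙 W, f))
    {ι : Type} [Fintype ι] (r : ι → D)
    (hscalar : ∀ i : ι, IsScalarObj k (r i))
    (hdistinct : ∀ i j : ι, Nonempty (r i ≅ r j) → i = j)
    (hzero : ∀ i j : D, IsScalarObj k i → IsScalarObj k j → IsEmpty (i ≅ j) →
      ∀ f : i ⟶ j, f = 0) :
    IsDinaturalOn F r (biproduct.ι fun i => F.obj (op (r i), r i)) := by
  intro i j h
  by_cases hij : i = j
  · subst hij
    obtain ⟨c, rfl⟩ := (hscalar i).2 h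
    rw [hsmul₁, hsmul₂, op_id]
  · obtain rfl : h = 0 :=
      hzero _ _ (hscalar i) (hscalar j) ⟨fun e => hij (hdistinct i j ⟨e⟩)⟩ h
    have h₁ := hsmul₁ (0 : r i ⟶ r j) (0 : k) (r i)
    have h₂ := hsmul₂ (op (r j)) (0 : r i ⟶ r j) (0 : k)
    rw [zero_smul, zero_smul] at h₁ h₂
    rw [h₁, h₂, zero_comp, zero_comp]

theorem fusion_coend_general
    (F : Dᵒᵖ × D ⥤ C)
    (hadd₁ : ∀ {X Y : D} (f g : X ⟶ Y) (W : D),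
      F.map ((f.op + g.op, 𝟙 W) : (Opposite.op Y, W) ⟶ (Opposite.op X, W)) =
        F.map (f.op, 𝟙 W) + F.map (g.op, 𝟙 W))
    (hsmul₁ : ∀ {X Y : D} (f : X ⟶ Y) (a : k) (W : D),
      F.map (((a • f).op, 𝟙 W) : (Opposite.op Y, W) ⟶ (Opposite.op X, W)) =
        a • F.map (f.op, 𝟙 W))
    (hadd₂ : ∀ (W : Dᵒᵖ) {X Y : D} (f g : X ⟶ Y),
      F.map ((𝟙 W, f + g) : (W, X) ⟶ (W, Y)) = F.map (𝟙 W, f) + F.map (𝟙 W, g))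
    (hsmul₂ : ∀ (W : Dᵒᵖ) {X Y : D} (f : X ⟶ Y) (a : k),
      F.map ((𝟙 W, a • f) : (W, X) ⟶ (W, Y)) = a • F.map (𝟙 W, f))
    (ι : Type) [Fintype ι] (r : ι → D)
    (hscalar : ∀ i : ι, IsScalarObj k (r i))
    (hdistinct : ∀ i j : ι, Nonempty (r i ≅ r j) → i = j)
    (hzero : ∀ i j : D, IsScalarObj k i → IsScalarObj k j → IsEmpty (i ≅ j) →
      ∀ f : i ⟶ j, f = 0)
    (dec : ∀ Y : D, IDecomp r Y) :
    (∀ {X Y : D} (f : X ⟶ Y),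
      F.map ((f.op, 𝟙 X) : (Opposite.op Y, X) ⟶ (Opposite.op X, X)) ≫ coendRho F r dec X =
        F.map ((𝟙 (Opposite.op Y), f) : (Opposite.op Y, X) ⟶ (Opposite.op Y, Y)) ≫
          coendRho F r dec Y) ∧
    (∀ (Z : C) (d : ∀ Y : D, F.obj (Opposite.op Y, Y) ⟶ Z),
      (∀ {X Y : D} (f : X ⟶ Y),
        F.map ((f.op, 𝟙 X) : (Opposite.op Y, X) ⟶ (Opposite.op X, X)) ≫ d X =
          F.map ((𝟙 (Opposite.op Y), f) : (Opposite.op Y, X) ⟶ (Opposite.op Y, Y)) ≫ d Y) →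
      ∃! φ : coendObj F r ⟶ Z, ∀ Y : D, coendRho F r dec Y ≫ φ = d Y) := by
  have hι := isDinaturalOn_biproduct_ι F hsmul₁ hsmul₂ r hscalar hdistinct hzero
  refine ⟨fun {X Y} f => isDinaturalOn_extend hadd₁ hadd₂ hι dec X Y f, fun Z d hd => ?_⟩
  refine ⟨biproduct.desc fun i => d (r i), fun Y => ?_,
    fun ψ hψ => biproduct.hom_ext' _ _ fun i => ?_⟩
  · refine (coendRho_comp F r dec Y _).trans ?_
    simp only [biproduct.ι_desc]
    exact (dec Y).extend_eq_of_dinatural hadd₁ _ _ fun a => hd _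
  · rw [biproduct.ι_desc, ← hψ, coendRho_comp]
    exact ((dec (r i)).extend_eq_of_dinatural hadd₁ _ _ fun a => hι.comp ψ _ _ _).symm

/-- If `D` is a fusion category over `k`, `C` is `k`-additive and `F : Dᵒᵖ × D ⥤ C` is
`k`-bilinear, then `(⨁_{i ∈ I} F(i,i), ρ)` is a coend of `F`: `ρ` is dinatural, and any
dinatural transformation from `F` factors uniquely through it. -/
theorem fusion_coend [MonoidalCategory D]
    (F : Dᵒᵖ × D ⥤ C)
    (hadd₁ : ∀ {X Y : D} (f g : X ⟶ Y) (W : D),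
      F.map ((f.op + g.op, 𝟙 W) : (Opposite.op Y, W) ⟶ (Opposite.op X, W)) =
        F.map (f.op, 𝟙 W) + F.map (g.op, 𝟙 W))
    (hsmul₁ : ∀ {X Y : D} (f : X ⟶ Y) (a : k) (W : D),
      F.map (((a • f).op, 𝟙 W) : (Opposite.op Y, W) ⟶ (Opposite.op X, W)) =
        a • F.map (f.op, 𝟙 W))
    (hadd₂ : ∀ (W : Dᵒᵖ) {X Y : D} (f g : X ⟶ Y),
      F.map ((𝟙 W, f + g) : (W, X) ⟶ (W, Y)) = F.map (𝟙 W, f) + F.map (𝟙 W, g))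
    (hsmul₂ : ∀ (W : Dᵒᵖ) {X Y : D} (f : X ⟶ Y) (a : k),
      F.map ((𝟙 W, a • f) : (W, X) ⟶ (W, Y)) = a • F.map (𝟙 W, f))
    (ι : Type) [Fintype ι] (r : ι → D)
    (hscalar : ∀ i : ι, IsScalarObj k (r i))
    (hdistinct : ∀ i j : ι, Nonempty (r i ≅ r j) → i = j)
    (hrep : ∀ X : D, IsScalarObj k X → ∃ i : ι, Nonempty (r i ≅ X))
    (hzero : ∀ i j : D, IsScalarObj k i → IsScalarObj k j → IsEmpty (i ≅ j) →
      ∀ f : i ⟶ j, f = 0)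
    (hunit : IsScalarObj k (𝟙_ D))
    (dec : ∀ Y : D, IDecomp r Y) :
    (∀ {X Y : D} (f : X ⟶ Y),
      F.map ((f.op, 𝟙 X) : (Opposite.op Y, X) ⟶ (Opposite.op X, X)) ≫ coendRho F r dec X =
        F.map ((𝟙 (Opposite.op Y), f) : (Opposite.op Y, X) ⟶ (Opposite.op Y, Y)) ≫
          coendRho F r dec Y) ∧
    (∀ (Z : C) (d : ∀ Y : D, F.obj (Opposite.op Y, Y) ⟶ Z),
      (∀ {X Y : D} (f : X ⟶ Y),
        F.map ((f.op, 𝟙 X) : (Opposite.op Y, X) ⟶ (Opposite.op X, X)) ≫ d X =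
          F.map ((𝟙 (Opposite.op Y), f) : (Opposite.op Y, X) ⟶ (Opposite.op Y, Y)) ≫ d Y) →
      ∃! φ : coendObj F r ⟶ Z, ∀ Y : D, coendRho F r dec Y ≫ φ = d Y) :=
  fusion_coend_general F hadd₁ hsmul₁ hadd₂ hsmul₂ ι r hscalar hdistinct hzero dec
end
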